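/- arXiv:1912.12449 — 4 statements merged into one kernel-verified Lean document; each statement's English description precedes it below -/
import Mathlib

section
/- Let M be a matroid on a finite set S. Every nonempty face of the base polytope BP_M is again a base polytope: for every nonempty face Q of BP_M there exists a matroid N on S such that Q = BP_N. -/
open Finset

/-- A (finite) matroid on a finite ground set `E`, given by a submodular rank function,
following the matroid rank axioms (R1)-(R3). -/
structure FinMatroid (α : Type*) [DecidableEq α] where
  E : Finset α
  r : Finset α → ℕ
  r_le_card : ∀ ⦃A : Finset α⦄, A ⊆ E → r A ≤ A.card
  r_mono : ∀ ⦃A B : Finset α⦄, A ⊆ B → B ⊆ E → r A ≤ r B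
  r_submod : ∀ ⦃A B : Finset α⦄, A ⊆ E → B ⊆ E → r (A ∪ B) + r (A ∩ B) ≤ r A + r B

namespace FinMatroid

variable {α : Type*} [DecidableEq α]

/-- A set is independent if it is a subset of the ground set whose rank is its cardinality. -/
def Indep (M : FinMatroid α) (A : Finset α) : Prop :=
  A ⊆ M.E ∧ M.r A = A.card

/-- A base is a maximal independent set. -/
def Base (M : FinMatroid α) (B : Finset α) : Prop :=
  M.Indep B ∧ ∀ ⦃A : Finset α⦄, M.Indep A → B ⊆ A → A = B

/-- A basis of `A` is a maximal independent subset of `A`. -/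
def BasisOf (M : FinMatroid α) (I A : Finset α) : Prop :=
  I ⊆ A ∧ M.Indep I ∧ ∀ ⦃J : Finset α⦄, J ⊆ A → M.Indep J → I ⊆ J → J = I

/-- A flat is a set `F` with `F = {s ∈ E : r (F ∪ {s}) = r F}`. -/
def Flat (M : FinMatroid α) (F : Finset α) : Prop :=
  F = M.E.filter (fun s => M.r (F ∪ {s}) = M.r F)

/-- A matroid is loopless if every singleton of the ground set has rank one. -/
def Loopless (M : FinMatroid α) : Prop :=
  ∀ s ∈ M.E, M.r {s} = 1

/-- The restriction `M|A` of `M` to `A`. -/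
def restrict (M : FinMatroid α) (A : Finset α) : FinMatroid α where
  E := A ∩ M.E
  r := M.r
  r_le_card := fun _ h => M.r_le_card (h.trans inter_subset_right)
  r_mono := fun _ _ h h' => M.r_mono h (h'.trans inter_subset_right)
  r_submod := fun _ _ h h' =>
    M.r_submod (h.trans inter_subset_right) (h'.trans inter_subset_right)

/-- The contraction `M/C` of `C` in `M`, with rank function `A ↦ r (A ∪ C) - r C`. -/
def contract (M : FinMatroid α) (C : Finset α) : FinMatroid α where
  E := M.E \ C
  r := fun A => M.r (A ∪ C ∩ M.E) - M.r (C ∩ M.E)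
  r_le_card := by
    intro A hA
    have hAE : A ⊆ M.E := hA.trans sdiff_subset
    have hc : C ∩ M.E ⊆ M.E := inter_subset_right
    have h1 := M.r_submod hAE hc
    have h2 := M.r_le_card hAE
    beta_reduce
    omega
  r_mono := by
    intro A B hAB hB
    have hBE : B ⊆ M.E := hB.trans sdiff_subset
    have hc : C ∩ M.E ⊆ M.E := inter_subset_right
    have h1 : M.r (A ∪ C ∩ M.E) ≤ M.r (B ∪ C ∩ M.E) :=
      M.r_mono (union_subset_union hAB (Finset.Subset.refl _)) (union_subset hBE hc)
    beta_reduce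
    omega
  r_submod := by
    intro A B hA hB
    have hAE : A ⊆ M.E := hA.trans sdiff_subset
    have hBE : B ⊆ M.E := hB.trans sdiff_subset
    have hc : C ∩ M.E ⊆ M.E := inter_subset_right
    have hAc : A ∪ C ∩ M.E ⊆ M.E := union_subset hAE hc
    have hBc : B ∪ C ∩ M.E ⊆ M.E := union_subset hBE hc
    have h1 := M.r_submod hAc hBc
    have e1 : (A ∪ C ∩ M.E) ∪ (B ∪ C ∩ M.E) = (A ∪ B) ∪ C ∩ M.E := by
      ext x; simp only [Finset.mem_union, Finset.mem_inter]; tauto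
    have e2 : (A ∪ C ∩ M.E) ∩ (B ∪ C ∩ M.E) = (A ∩ B) ∪ C ∩ M.E := by
      ext x; simp only [Finset.mem_union, Finset.mem_inter]; tauto
    rw [e1, e2] at h1
    have hABc : (A ∩ B) ∪ C ∩ M.E ⊆ M.E := union_subset (inter_subset_left.trans hAE) hc
    have hABc' : (A ∪ B) ∪ C ∩ M.E ⊆ M.E := union_subset (union_subset hAE hBE) hc
    have h2 : M.r (C ∩ M.E) ≤ M.r ((A ∩ B) ∪ C ∩ M.E) := M.r_mono subset_union_right hABc
    have h3 : M.r (C ∩ M.E) ≤ M.r (A ∪ C ∩ M.E) := M.r_mono subset_union_right hAc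
    have h4 : M.r (C ∩ M.E) ≤ M.r (B ∪ C ∩ M.E) := M.r_mono subset_union_right hBc
    have h5 : M.r (C ∩ M.E) ≤ M.r ((A ∪ B) ∪ C ∩ M.E) := M.r_mono subset_union_right hABc'
    beta_reduce
    omega

/-- `A` is a separator of `M` if `r A + r (E \ A) = r E`. -/
def Separator (M : FinMatroid α) (A : Finset α) : Prop :=
  A ⊆ M.E ∧ M.r A + M.r (M.E \ A) = M.r M.E

/-- `M` is connected (inseparable) if its ground set is nonempty and its only
separators are `∅` and `E`. -/
def Connected (M : FinMatroid α) : Prop :=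
  M.E.Nonempty ∧ ∀ A : Finset α, M.Separator A → A = ∅ ∨ A = M.E

/-- For connected `M`, a set `∅ ≠ F ⊊ E` is non-degenerate if both `M|F` and `M/F`
are connected. -/
def Nondegenerate (M : FinMatroid α) (F : Finset α) : Prop :=
  F ≠ ∅ ∧ F ⊂ M.E ∧ (M.restrict F).Connected ∧ (M.contract F).Connected

end FinMatroid

noncomputable section

open FinMatroid

/-- The indicator (incidence) vector `1^A ∈ ℝ^α` of a finite set `A`. -/
def indicatorVec {α : Type*} [DecidableEq α] (A : Finset α) : α → ℝ :=
  fun i => if i ∈ A then 1 else 0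

/-- The base polytope of a matroid: the convex hull of the indicator vectors of its bases. -/
def basePolytope {α : Type*} [DecidableEq α] (M : FinMatroid α) : Set (α → ℝ) :=
  convexHull ℝ {x | ∃ B : Finset α, M.Base B ∧ x = indicatorVec B}

/-- `Q` is a face of `P`: either `∅`, or `P` itself, or the subset of `P` where some
linear functional attains its maximum over `P` (an exposed face). -/
def IsFaceOf {α : Type*} (P Q : Set (α → ℝ)) : Prop :=
  Q = ∅ ∨ Q = P ∨ ∃ ℓ : (α → ℝ) →ₗ[ℝ] ℝ, Q = {x ∈ P | ∀ y ∈ P, ℓ y ≤ ℓ x}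

/-- The dimension of a convex set: the dimension of the direction of its affine span. -/
def sdim {α : Type*} (Q : Set (α → ℝ)) : ℕ :=
  Module.finrank ℝ (affineSpan ℝ Q).direction

end

/-!
A linear functional `ℓ` attains its maximum over the convex hull of a set exactly on the convex
hull of the maximizers in the set, so the face of `BP_M` exposed by `ℓ` is the convex hull of the
indicator vectors of the bases of maximum weight, for the weights `w i = ℓ (Pi.single i 1)`.
These are the bases of the direct sum, over the weight values `v`, of the minors
`(M ∣ E_{≥ v}) / E_{> v}`. By the exchange argument a maximum-weight base meets every `E_{≥ v}`
and every `E_{> v}` in a set of full rank, hence meets each level set `w⁻¹ v` in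
`r E_{≥ v} - r E_{> v}` elements; conversely these level counts hold for every base of the direct
sum, and they determine the weight of a base.
-/

namespace FinMatroid

variable {α : Type*} [DecidableEq α] {M : FinMatroid α}

@[simp] lemma r_empty (M : FinMatroid α) : M.r ∅ = 0 := by
  simpa using M.r_le_card (empty_subset M.E)

lemma indep_empty (M : FinMatroid α) : M.Indep ∅ := ⟨empty_subset _, by simp⟩

lemma Indep.subset {X Y : Finset α} (hY : M.Indep Y) (hXY : X ⊆ Y) : M.Indep X := by
  have hXE := hXY.trans hY.1
  have hdE : Y \ X ⊆ M.E := sdiff_subset.trans hY.1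
  have hsub := M.r_submod hXE hdE
  rw [union_sdiff_of_subset hXY, inter_sdiff_self, r_empty] at hsub
  have := M.r_le_card hXE
  have := M.r_le_card hdE
  have := card_sdiff_add_card_eq_card hXY
  have := hY.2
  exact ⟨hXE, by omega⟩

lemma r_union_le_r_add_card_sdiff {A B : Finset α} (hA : A ⊆ M.E) (hB : B ⊆ M.E) :
    M.r (A ∪ B) ≤ M.r B + #(A \ B) := by
  have hsub := M.r_submod (sdiff_subset.trans hA : A \ B ⊆ M.E) hB
  rw [sdiff_union_self_eq_union, sdiff_inter_self, r_empty] at hsub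
  have := M.r_le_card (sdiff_subset.trans hA : A \ B ⊆ M.E)
  omega

lemma r_insert_le {X : Finset α} {y : α} (hX : X ⊆ M.E) (hy : y ∈ M.E) :
    M.r (insert y X) ≤ M.r X + 1 := by
  have h := r_union_le_r_add_card_sdiff (singleton_subset_iff.2 hy) hX
  have : #({y} \ X) ≤ 1 := (card_le_card sdiff_subset).trans (card_singleton y).le
  rw [← insert_eq] at h
  omega

lemma r_union_eq_of_forall_r_insert_eq {X S : Finset α} (hX : X ⊆ M.E) (hS : S ⊆ M.E)
    (h : ∀ y ∈ S, M.r (insert y X) = M.r X) : M.r (X ∪ S) = M.r X := by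
  induction S using Finset.induction with
  | empty => simp
  | insert a S _ ih =>
    rw [insert_subset_iff] at hS
    have hXS := ih hS.2 fun y hy => h y (mem_insert_of_mem hy)
    have hXa := h a (mem_insert_self a S)
    have hsub := M.r_submod (union_subset hX hS.2) (insert_subset hS.1 hX)
    have hinter : M.r X ≤ M.r ((X ∪ S) ∩ insert a X) :=
      M.r_mono (subset_inter subset_union_left (subset_insert a X))
        (inter_subset_left.trans (union_subset hX hS.2))
    have hunion : X ∪ S ∪ insert a X = X ∪ insert a S := by grind
    have hmono : M.r X ≤ M.r (X ∪ insert a S) :=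
      M.r_mono subset_union_left (union_subset hX (insert_subset hS.1 hS.2))
    rw [hunion] at hsub
    omega

lemma Indep.exists_insert_of_card_lt_r {X T : Finset α} (hX : M.Indep X) (hT : T ⊆ M.E)
    (hlt : #X < M.r T) : ∃ y ∈ T, y ∉ X ∧ M.Indep (insert y X) := by
  by_contra! hcon
  have hstuck : ∀ y ∈ T, M.r (insert y X) = M.r X := by
    intro y hy
    by_cases hyX : y ∈ X
    · rw [insert_eq_of_mem hyX]
    have hyXE : insert y X ⊆ M.E := insert_subset (hT hy) hX.1
    have := M.r_insert_le hX.1 (hT hy)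
    have := M.r_mono (subset_insert y X) hyXE
    have hnot : M.r (insert y X) ≠ #(insert y X) := fun h => hcon y hy hyX ⟨hyXE, h⟩
    have := card_insert_of_notMem hyX
    have := hX.2
    omega
  have := r_union_eq_of_forall_r_insert_eq hX.1 hT hstuck
  have := M.r_mono subset_union_right (union_subset hX.1 hT)
  have := hX.2
  omega

lemma Indep.exists_superset_card_eq_r {I S : Finset α} (hI : M.Indep I) (hS : S ⊆ M.E)
    (hIS : I ⊆ S) : ∃ J, I ⊆ J ∧ J ⊆ S ∧ M.Indep J ∧ #J = M.r S := by
  have hle : #I ≤ M.r S := hI.2 ▸ M.r_mono hIS hS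
  induction hn : M.r S - #I generalizing I with
  | zero => exact ⟨I, Subset.rfl, hIS, hI, by omega⟩
  | succ n ih =>
    obtain ⟨y, hyS, hyI, hyind⟩ := hI.exists_insert_of_card_lt_r hS (by omega)
    have hcard := card_insert_of_notMem hyI
    obtain ⟨J, hIJ, hJ⟩ := ih hyind (insert_subset hyS hIS) (by omega) (by omega)
    exact ⟨J, (subset_insert y I).trans hIJ, hJ⟩

lemma base_iff {B : Finset α} : M.Base B ↔ M.Indep B ∧ #B = M.r M.E := by
  refine ⟨fun hB => ⟨hB.1, ?_⟩, fun ⟨hind, hcard⟩ => ⟨hind, fun A hA hBA => ?_⟩⟩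
  · obtain ⟨J, hBJ, -, hJ, hJcard⟩ := hB.1.exists_superset_card_eq_r Subset.rfl hB.1.1
    rw [← hJcard, hB.2 hJ hBJ]
  · have := M.r_mono hA.1 Subset.rfl
    have := hA.2
    exact (eq_of_subset_of_card_le hBA (by omega)).symm

lemma Base.card {B : Finset α} (hB : M.Base B) : #B = M.r M.E := (base_iff.1 hB).2

lemma exists_base (M : FinMatroid α) : ∃ B, M.Base B := by
  obtain ⟨J, -, -, hJ, hJcard⟩ :=
    M.indep_empty.exists_superset_card_eq_r Subset.rfl (empty_subset M.E)
  exact ⟨J, base_iff.2 ⟨hJ, hJcard⟩⟩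

lemma Base.exists_base_of_indep_subset_insert {B I : Finset α} {y : α} (hB : M.Base B)
    (hy : y ∈ M.E) (hI : M.Indep I) (hIB : I ⊆ insert y B) :
    ∃ J, M.Base J ∧ I ⊆ J ∧ J ⊆ insert y B := by
  have hyB : insert y B ⊆ M.E := insert_subset hy hB.1.1
  have hr : M.r (insert y B) = M.r M.E := by
    refine le_antisymm (M.r_mono hyB Subset.rfl) ?_
    rw [← hB.card, ← hB.1.2]
    exact M.r_mono (subset_insert y B) hyB
  obtain ⟨J, hIJ, hJB, hJ, hJcard⟩ := hI.exists_superset_card_eq_r hyB hIB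
  exact ⟨J, base_iff.2 ⟨hJ, hJcard.trans hr⟩, hIJ, hJB⟩

variable (M) (w : α → ℝ)

def IsMaxWeightBase (B : Finset α) : Prop :=
  M.Base B ∧ ∀ B', M.Base B' → ∑ i ∈ B', w i ≤ ∑ i ∈ B, w i

lemma exists_isMaxWeightBase : ∃ B, M.IsMaxWeightBase w B := by
  classical
  obtain ⟨B₀, hB₀⟩ := M.exists_base
  obtain ⟨B, hB, hmax⟩ := exists_max_image {B ∈ M.E.powerset | M.Base B}
    (fun B => ∑ i ∈ B, w i) ⟨B₀, mem_filter.2 ⟨mem_powerset.2 hB₀.1.1, hB₀⟩⟩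
  simp only [mem_filter, mem_powerset] at hB hmax
  exact ⟨B, hB.2, fun B' hB' => hmax B' ⟨hB'.1.1, hB'⟩⟩

variable {M w}

/-- The exchange argument: otherwise a base containing an element `y ∈ U` in place of some
`z ∉ U` would be heavier. -/
lemma IsMaxWeightBase.card_inter_eq_r {B U : Finset α} (hB : M.IsMaxWeightBase w B)
    (hU : U ⊆ M.E) (hUw : ∀ y ∈ U, ∀ z ∈ M.E, z ∉ U → w z < w y) : #(B ∩ U) = M.r U := by
  have hX : M.Indep (B ∩ U) := hB.1.1.subset inter_subset_left
  refine le_antisymm (hX.2 ▸ M.r_mono inter_subset_right hU) (not_lt.1 fun hlt => ?_)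
  obtain ⟨y, hyU, hyX, hyind⟩ := hX.exists_insert_of_card_lt_r hU hlt
  have hyB : y ∉ B := fun h => hyX (mem_inter.2 ⟨h, hyU⟩)
  obtain ⟨J, hJ, hyXJ, hJB⟩ := hB.1.exists_base_of_indep_subset_insert (hU hyU) hyind
    (insert_subset_insert y inter_subset_left)
  have hcard : #(insert y B \ J) = 1 := by
    have := card_sdiff_add_card_eq_card hJB
    rw [card_insert_of_notMem hyB, hJ.card, ← hB.1.card] at this
    omega
  obtain ⟨z, hz⟩ := card_eq_one.1 hcard
  have hzJ : z ∈ insert y B \ J := hz ▸ mem_singleton_self z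
  rw [mem_sdiff] at hzJ
  have hzB : z ∈ B := (mem_insert.1 hzJ.1).resolve_left
    fun h => hzJ.2 (h ▸ hyXJ (mem_insert_self y _))
  have hzU : z ∉ U := fun h => hzJ.2 (hyXJ (mem_insert_of_mem (mem_inter.2 ⟨hzB, h⟩)))
  have hsum := sum_sdiff hJB (f := w)
  rw [hz, sum_singleton, sum_insert hyB] at hsum
  linarith [hB.2 J hJ, hUw y hyU z (hB.1.1.1 hzB) hzU]

end FinMatroid

lemma Finset.sum_filter_le_sub_filter_lt {α β γ : Type*} [AddCommGroup β] [LinearOrder γ]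
    (w : α → γ) (f : Finset α → β) {V : Finset γ} {G : Finset α} (hG : ∀ x ∈ G, w x ∈ V) :
    ∑ v ∈ V, (f {x ∈ G | v ≤ w x} - f {x ∈ G | v < w x}) = f G - f ∅ := by
  induction V using Finset.induction_on_min generalizing G with
  | empty =>
    obtain rfl : G = ∅ := eq_empty_of_forall_notMem fun x hx => by simpa using hG x hx
    simp
  | insert a V hV ih =>
    have haV : a ∉ V := fun h => lt_irrefl a (hV a h)
    have hGa : {x ∈ G | a ≤ w x} = G := filter_true_of_mem fun x hx => by
      rcases mem_insert.1 (hG x hx) with h | h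
      · exact h.ge
      · exact (hV _ h).le
    have hG' : ∀ x ∈ {x ∈ G | a < w x}, w x ∈ V := by
      intro x hx
      rw [mem_filter] at hx
      exact (mem_insert.1 (hG x hx.1)).resolve_left hx.2.ne'
    have hfilter : ∀ v ∈ V, ∀ (p : γ → Prop) [DecidablePred p], (∀ u, p u → v ≤ u) →
        {x ∈ {x ∈ G | a < w x} | p (w x)} = {x ∈ G | p (w x)} := by
      intro v hv p _ hp
      rw [filter_filter]
      exact filter_congr fun x _ => ⟨fun h => h.2, fun h => ⟨(hV v hv).trans_le (hp _ h), h⟩⟩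
    rw [sum_insert haV, hGa, ← sub_add_sub_cancel (f G) (f {x ∈ G | a < w x}) (f ∅), ← ih hG']
    congr 1
    refine sum_congr rfl fun v hv => ?_
    rw [hfilter v hv (v ≤ ·) fun _ h => h, hfilter v hv (v < ·) fun _ h => h.le]

namespace FinMatroid

variable {α : Type*} [DecidableEq α] (M : FinMatroid α) (w : α → ℝ)

noncomputable def weightGe (v : ℝ) : Finset α := {x ∈ M.E | v ≤ w x}

noncomputable def weightGt (v : ℝ) : Finset α := {x ∈ M.E | v < w x}

/-- The rank of `X` in the minor `(M ∣ weightGe w v) / weightGt w v`. -/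
noncomputable def levelRank (X : Finset α) (v : ℝ) : ℕ :=
  M.r (X ∩ M.weightGe w v ∪ M.weightGt w v) - M.r (M.weightGt w v)

lemma weightGe_subset (v : ℝ) : M.weightGe w v ⊆ M.E := filter_subset _ _

lemma weightGt_subset (v : ℝ) : M.weightGt w v ⊆ M.E := filter_subset _ _

lemma weightGt_subset_weightGe (v : ℝ) : M.weightGt w v ⊆ M.weightGe w v :=
  monotone_filter_right _ fun _ _ => le_of_lt

lemma inter_weightGe_union_weightGt_subset (X : Finset α) (v : ℝ) :
    X ∩ M.weightGe w v ∪ M.weightGt w v ⊆ M.E :=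
  union_subset (inter_subset_right.trans (M.weightGe_subset w v)) (M.weightGt_subset w v)

lemma levelRank_add_r_weightGt (X : Finset α) (v : ℝ) :
    M.levelRank w X v + M.r (M.weightGt w v) = M.r (X ∩ M.weightGe w v ∪ M.weightGt w v) :=
  Nat.sub_add_cancel (M.r_mono subset_union_right (M.inter_weightGe_union_weightGt_subset w X v))

lemma levelRank_mono {X Y : Finset α} (hXY : X ⊆ Y) (v : ℝ) :
    M.levelRank w X v ≤ M.levelRank w Y v :=
  Nat.sub_le_sub_right (M.r_mono (union_subset_union (inter_subset_inter_right hXY) Subset.rfl)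
    (M.inter_weightGe_union_weightGt_subset w Y v)) _

lemma levelRank_submod (X Y : Finset α) (v : ℝ) :
    M.levelRank w (X ∪ Y) v + M.levelRank w (X ∩ Y) v ≤ M.levelRank w X v + M.levelRank w Y v := by
  have h := M.r_submod (M.inter_weightGe_union_weightGt_subset w X v)
    (M.inter_weightGe_union_weightGt_subset w Y v)
  have hunion : (X ∩ M.weightGe w v ∪ M.weightGt w v) ∪ (Y ∩ M.weightGe w v ∪ M.weightGt w v) =
      (X ∪ Y) ∩ M.weightGe w v ∪ M.weightGt w v := by
    ext; simp only [mem_union, mem_inter]; tauto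
  have hinter : (X ∩ M.weightGe w v ∪ M.weightGt w v) ∩ (Y ∩ M.weightGe w v ∪ M.weightGt w v) =
      (X ∩ Y) ∩ M.weightGe w v ∪ M.weightGt w v := by
    ext; simp only [mem_union, mem_inter]; tauto
  rw [hunion, hinter] at h
  have := M.levelRank_add_r_weightGt w X v
  have := M.levelRank_add_r_weightGt w Y v
  have := M.levelRank_add_r_weightGt w (X ∪ Y) v
  have := M.levelRank_add_r_weightGt w (X ∩ Y) v
  omega

lemma levelRank_add_r_inter_weightGt_le (X : Finset α) (v : ℝ) :
    M.levelRank w X v + M.r (X ∩ M.weightGt w v) ≤ M.r (X ∩ M.weightGe w v) := by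
  have h := M.r_submod (inter_subset_right.trans (M.weightGe_subset w v)) (M.weightGt_subset w v)
    (A := X ∩ M.weightGe w v)
  rw [inter_assoc, inter_eq_right.2 (M.weightGt_subset_weightGe w v)] at h
  have := M.levelRank_add_r_weightGt w X v
  omega

lemma levelRank_le_card (X : Finset α) (v : ℝ) : M.levelRank w X v ≤ #{x ∈ X | w x = v} := by
  have h := M.r_union_le_r_add_card_sdiff (inter_subset_right.trans (M.weightGe_subset w v))
    (M.weightGt_subset w v) (A := X ∩ M.weightGe w v)
  have hsub : (X ∩ M.weightGe w v) \ M.weightGt w v ⊆ {x ∈ X | w x = v} := by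
    intro x hx
    simp only [weightGe, weightGt, mem_sdiff, mem_inter, mem_filter, not_and, not_lt] at hx ⊢
    exact ⟨hx.1.1, le_antisymm (hx.2 hx.1.2.1) hx.1.2.2⟩
  have := card_le_card hsub
  have := M.levelRank_add_r_weightGt w X v
  omega

lemma levelRank_ground_add_r_weightGt (v : ℝ) :
    M.levelRank w M.E v + M.r (M.weightGt w v) = M.r (M.weightGe w v) := by
  rw [levelRank_add_r_weightGt, inter_eq_right.2 (M.weightGe_subset w v),
    union_eq_left.2 (M.weightGt_subset_weightGe w v)]

lemma card_eq_sum_card_level {X : Finset α} (hX : X ⊆ M.E) :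
    #X = ∑ v ∈ M.E.image w, #{x ∈ X | w x = v} :=
  card_eq_sum_card_fiberwise fun _ hx => mem_image_of_mem w (hX hx)

lemma card_inter_weightGe {X : Finset α} (hX : X ⊆ M.E) (v : ℝ) :
    #(X ∩ M.weightGe w v) = #{x ∈ X | w x = v} + #(X ∩ M.weightGt w v) := by
  rw [← card_union_of_disjoint]
  · congr 1
    ext x
    simp only [weightGe, weightGt, mem_inter, mem_filter, mem_union]
    have := @hX x
    grind
  · exact disjoint_left.2 fun _ hx hx' => by
      simp only [weightGt, mem_filter, mem_inter] at hx hx'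
      exact hx'.2.2.ne' hx.2

noncomputable def faceMatroid : FinMatroid α where
  E := M.E
  r X := ∑ v ∈ M.E.image w, M.levelRank w X v
  r_le_card {X} hX := (card_eq_sum_card_level M w hX).symm ▸
    sum_le_sum fun v _ => M.levelRank_le_card w X v
  r_mono _ _ hXY _ := sum_le_sum fun v _ => M.levelRank_mono w hXY v
  r_submod X Y _ _ := by
    rw [← sum_add_distrib, ← sum_add_distrib]
    exact sum_le_sum fun v _ => M.levelRank_submod w X Y v

@[simp] lemma faceMatroid_E : (M.faceMatroid w).E = M.E := rfl

lemma faceMatroid_r (X : Finset α) :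
    (M.faceMatroid w).r X = ∑ v ∈ M.E.image w, M.levelRank w X v := rfl

variable {M w}

lemma faceMatroid_r_le_r {X : Finset α} (hX : X ⊆ M.E) : (M.faceMatroid w).r X ≤ M.r X := by
  have htel := sum_filter_le_sub_filter_lt w (fun S => (M.r (X ∩ S) : ℤ)) (G := M.E)
    (V := M.E.image w) fun x hx => mem_image_of_mem w hx
  rw [inter_eq_left.2 hX, inter_empty, r_empty, Nat.cast_zero, sub_zero] at htel
  have hle : ∀ v ∈ M.E.image w, (M.levelRank w X v : ℤ) ≤
      M.r (X ∩ M.weightGe w v) - M.r (X ∩ M.weightGt w v) := fun v _ => by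
    have := M.levelRank_add_r_inter_weightGt_le w X v
    omega
  have h := (sum_le_sum hle).trans_eq htel
  rw [← Nat.cast_sum, ← faceMatroid_r] at h
  exact_mod_cast h

lemma Indep.of_faceMatroid {X : Finset α} (hX : (M.faceMatroid w).Indep X) : M.Indep X := by
  obtain ⟨hXE, hXr⟩ := hX
  have := faceMatroid_r_le_r (M := M) (w := w) hXE
  have := M.r_le_card hXE
  exact ⟨hXE, by omega⟩

lemma IsMaxWeightBase.levelRank_eq_card_level {B : Finset α} (hB : M.IsMaxWeightBase w B)
    (v : ℝ) :
    M.levelRank w B v = #{x ∈ B | w x = v} ∧ M.levelRank w M.E v = #{x ∈ B | w x = v} := by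
  have hBE := hB.1.1.1
  have hGe := hB.card_inter_eq_r (M.weightGe_subset w v) fun y hy z hz hzU => by
    simp only [weightGe, mem_filter, not_and, not_le] at hy hzU
    exact (hzU hz).trans_le hy.2
  have hGt := hB.card_inter_eq_r (M.weightGt_subset w v) fun y hy z hz hzU => by
    simp only [weightGt, mem_filter, not_and, not_lt] at hy hzU
    exact (hzU hz).trans_lt hy.2
  have hindep : M.r (B ∩ M.weightGe w v) = #(B ∩ M.weightGe w v) :=
    (hB.1.1.subset inter_subset_left).2
  have hmono := M.r_mono subset_union_left (M.inter_weightGe_union_weightGt_subset w B v)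
  have := M.card_inter_weightGe w hBE v
  have := M.levelRank_add_r_weightGt w B v
  have := M.levelRank_le_card w B v
  have := M.levelRank_ground_add_r_weightGt w v
  omega

lemma IsMaxWeightBase.faceMatroid_base {B : Finset α} (hB : M.IsMaxWeightBase w B) :
    (M.faceMatroid w).Base B := by
  have hBE := hB.1.1.1
  refine base_iff.2 ⟨⟨hBE, ?_⟩, ?_⟩ <;> rw [faceMatroid_r, card_eq_sum_card_level M w hBE]
  · exact sum_congr rfl fun v _ => (hB.levelRank_eq_card_level v).1
  · exact (sum_congr rfl fun v _ => (hB.levelRank_eq_card_level v).2).symm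

lemma Base.card_level_eq_of_faceMatroid {B : Finset α} (hB : (M.faceMatroid w).Base B) :
    ∀ v ∈ M.E.image w, #{x ∈ B | w x = v} = M.levelRank w M.E v := by
  obtain ⟨⟨hBE, hr⟩, hcard⟩ := base_iff.1 hB
  rw [faceMatroid_E] at hBE
  rw [faceMatroid_E, faceMatroid_r] at hcard
  rw [faceMatroid_r] at hr
  have hB_level := (sum_eq_sum_iff_of_le fun v _ => M.levelRank_le_card w B v).1
    (hr.trans (card_eq_sum_card_level M w hBE))
  have hB_ground := (sum_eq_sum_iff_of_le fun v _ => M.levelRank_mono w hBE v).1 (hr.trans hcard)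
  intro v hv
  rw [← hB_level v hv, hB_ground v hv]

lemma sum_weight_eq_of_card_level {B : Finset α} (hBE : B ⊆ M.E)
    (hB : ∀ v ∈ M.E.image w, #{x ∈ B | w x = v} = M.levelRank w M.E v) :
    ∑ i ∈ B, w i = ∑ v ∈ M.E.image w, M.levelRank w M.E v * v := by
  rw [← sum_fiberwise_of_maps_to (g := w) fun x hx => mem_image_of_mem w (hBE hx)]
  refine sum_congr rfl fun v hv => ?_
  rw [sum_congr rfl fun x hx => (mem_filter.1 hx).2, sum_const, nsmul_eq_mul, hB v hv]

theorem faceMatroid_base_iff {B : Finset α} :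
    (M.faceMatroid w).Base B ↔ M.IsMaxWeightBase w B := by
  refine ⟨fun hB => ?_, IsMaxWeightBase.faceMatroid_base⟩
  obtain ⟨B₀, hB₀⟩ := M.exists_isMaxWeightBase w
  have hB₀N := hB₀.faceMatroid_base
  have hBM : M.Base B := base_iff.2 ⟨hB.1.of_faceMatroid, by rw [hB.card, ← hB₀N.card, hB₀.1.card]⟩
  have hweight : ∑ i ∈ B, w i = ∑ i ∈ B₀, w i := by
    rw [sum_weight_eq_of_card_level hBM.1.1 hB.card_level_eq_of_faceMatroid,
      sum_weight_eq_of_card_level hB₀.1.1.1 hB₀N.card_level_eq_of_faceMatroid]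
  exact ⟨hBM, fun B' hB' => hweight ▸ hB₀.2 B' hB'⟩

end FinMatroid

section Polytope

variable {𝕜 E : Type*} [Field 𝕜] [LinearOrder 𝕜] [IsStrictOrderedRing 𝕜] [AddCommGroup E]
  [Module 𝕜 E]

def LinearMap.maximizers (ℓ : E →ₗ[𝕜] 𝕜) (A : Set E) : Set E := {x ∈ A | ∀ y ∈ A, ℓ y ≤ ℓ x}

/-- A point of `convexHull S` maximizing `ℓ` is a convex combination of points of `S` which all
attain the maximum, as the weights are positive. -/
theorem LinearMap.maximizers_convexHull (ℓ : E →ₗ[𝕜] 𝕜) (S : Set E) :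
    ℓ.maximizers (convexHull 𝕜 S) = convexHull 𝕜 (ℓ.maximizers S) := by
  apply Set.Subset.antisymm
  · rintro x ⟨hx, hmax⟩
    obtain ⟨ι, t, c, z, hc0, hc1, hz, rfl⟩ := (convexHull_eq S).subset hx
    have hℓ : ℓ (t.centerMass c z) = ∑ i ∈ t, c i * ℓ (z i) := by
      simp [Finset.centerMass_eq_of_sum_1 _ _ hc1, map_sum]
    have hzero : ∑ i ∈ t, c i * (ℓ (t.centerMass c z) - ℓ (z i)) = 0 := by
      simp only [mul_sub, Finset.sum_sub_distrib, ← Finset.sum_mul, hc1, one_mul, ← hℓ, sub_self]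
    have hnonneg : ∀ i ∈ t, 0 ≤ c i * (ℓ (t.centerMass c z) - ℓ (z i)) := fun i hi =>
      mul_nonneg (hc0 i hi) (sub_nonneg.2 (hmax _ (subset_convexHull 𝕜 S (hz i hi))))
    have hattain : ∀ i ∈ t, c i ≠ 0 → ℓ (z i) = ℓ (t.centerMass c z) := fun i hi hci => by
      have := (Finset.sum_eq_zero_iff_of_nonneg hnonneg).1 hzero i hi
      rw [mul_eq_zero] at this
      exact (sub_eq_zero.1 (this.resolve_left hci)).symm
    classical
    rw [← Finset.centerMass_filter_ne_zero]
    refine Finset.centerMass_mem_convexHull _ (fun i hi => hc0 i (Finset.filter_subset _ _ hi))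
      (by rw [Finset.sum_filter_ne_zero, hc1]; exact one_pos) fun i hi => ?_
    rw [Finset.mem_filter] at hi
    refine ⟨hz i hi.1, fun y hy => ?_⟩
    rw [hattain i hi.1 hi.2]
    exact hmax y (subset_convexHull 𝕜 S hy)
  · intro x hx
    refine ⟨convexHull_mono (Set.sep_subset _ _) hx, fun y hy => ?_⟩
    obtain ⟨x₀, hx₀S, hx₀max⟩ := convexHull_nonempty_iff.1 ⟨x, hx⟩
    calc ℓ y ≤ ℓ x₀ := convexHull_min hx₀max (convex_halfSpace_le ℓ.isLinear _) hy
      _ ≤ ℓ x := convexHull_min (fun x' hx' => hx'.2 x₀ hx₀S) (convex_halfSpace_ge ℓ.isLinear _) hx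

end Polytope

lemma LinearMap.apply_indicatorVec {α : Type*} [DecidableEq α] (ℓ : (α → ℝ) →ₗ[ℝ] ℝ)
    (B : Finset α) : ℓ (indicatorVec B) = ∑ i ∈ B, ℓ (Pi.single i 1) := by
  have : indicatorVec B = ∑ i ∈ B, Pi.single i (1 : ℝ) := by
    ext j
    simp [indicatorVec, Finset.sum_apply, Pi.single_apply]
  rw [this, map_sum]

/-- Every nonempty face of a matroid base polytope is again a matroid
base polytope (of a matroid on the same ground set). -/
theorem statement0 {α : Type*} [DecidableEq α] (M : FinMatroid α)
    (Q : Set (α → ℝ)) (hface : IsFaceOf (basePolytope M) Q) (hne : Q.Nonempty) :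
    ∃ N : FinMatroid α, N.E = M.E ∧ basePolytope N = Q := by
  rcases hface with rfl | rfl | ⟨ℓ, rfl⟩
  · exact absurd hne Set.not_nonempty_empty
  · exact ⟨M, rfl, rfl⟩
  refine ⟨M.faceMatroid fun i => ℓ (Pi.single i 1), rfl, ?_⟩
  change _ = ℓ.maximizers (basePolytope M)
  rw [basePolytope, basePolytope, LinearMap.maximizers_convexHull]
  congr 1
  ext x
  constructor
  · rintro ⟨B, hB, rfl⟩
    rw [FinMatroid.faceMatroid_base_iff] at hB
    refine ⟨⟨B, hB.1, rfl⟩, ?_⟩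
    rintro _ ⟨B', hB', rfl⟩
    simpa only [LinearMap.apply_indicatorVec] using hB.2 B' hB'
  · rintro ⟨⟨B, hB, rfl⟩, hmax⟩
    refine ⟨B, FinMatroid.faceMatroid_base_iff.2 ⟨hB, fun B' hB' => ?_⟩, rfl⟩
    simpa only [LinearMap.apply_indicatorVec] using hmax _ ⟨B', hB', rfl⟩
end

section
/- Let M be a matroid on a finite set E with rank function r, let F, L ⊆ E, and let N := (M/(F ∩ L))|_{(F ∪ L) ∖ (F ∩ L)} with rank function r_N. Then r(F ∪ L) + r(F ∩ L) = r(F) + r(L) if and only if r_N(F ∖ L) + r_N(L ∖ F) = r_N((F ∪ L) ∖ (F ∩ L)), i.e., if and only if F ∖ L and L ∖ F are separators of N. -/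
open Finset

namespace FinMatroid

variable {α : Type*} [DecidableEq α]

@[simp]
theorem restrict_r (M : FinMatroid α) (A : Finset α) : (M.restrict A).r = M.r := rfl

theorem contract_r_sdiff_add_r {M : FinMatroid α} {C X : Finset α} (hCX : C ⊆ X)
    (hX : X ⊆ M.E) : (M.contract C).r (X \ C) + M.r C = M.r X := by
  have hC : C ∩ M.E = C := inter_eq_left.mpr (hCX.trans hX)
  have hCle : M.r C ≤ M.r X := M.r_mono hCX hX
  change M.r (X \ C ∪ C ∩ M.E) - M.r (C ∩ M.E) + M.r C = M.r X
  rw [hC, sdiff_union_of_subset hCX]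
  omega

end FinMatroid

/-- `{F, L}` is a modular pair iff `F \ L` and `L \ F` are separators of
`N := (M/(F ∩ L))|_{(F ∪ L) \ (F ∩ L)}`, i.e. `r_N(F \ L) + r_N(L \ F) = r_N(E(N))`. -/
theorem statement3 {α : Type*} [DecidableEq α] (M : FinMatroid α)
    (F L : Finset α) (hF : F ⊆ M.E) (hL : L ⊆ M.E) :
    M.r (F ∪ L) + M.r (F ∩ L) = M.r F + M.r L ↔
      ((M.contract (F ∩ L)).restrict ((F ∪ L) \ (F ∩ L))).r (F \ L) +
          ((M.contract (F ∩ L)).restrict ((F ∪ L) \ (F ∩ L))).r (L \ F) =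
        ((M.contract (F ∩ L)).restrict ((F ∪ L) \ (F ∩ L))).r ((F ∪ L) \ (F ∩ L)) := by
  have hrF := FinMatroid.contract_r_sdiff_add_r (inter_subset_left : F ∩ L ⊆ F) hF
  have hrL := FinMatroid.contract_r_sdiff_add_r (inter_subset_right : F ∩ L ⊆ L) hL
  have hrU := FinMatroid.contract_r_sdiff_add_r
    (inter_subset_left.trans subset_union_left : F ∩ L ⊆ F ∪ L) (union_subset hF hL)
  rw [sdiff_inter_self_left] at hrF
  rw [sdiff_inter_self_right] at hrL
  simp only [FinMatroid.restrict_r]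
  omega
end

section
/- Let M be a matroid on a finite set E with rank function r and let F_1, …, F_m ⊆ E. Suppose there exists a base B of M with |B ∩ F_i| = r(F_i) for all i ∈ {1,…,m}, and suppose moreover that every element of E belongs to at least one such base. Then every member of the lattice closure of {F_1, …, F_m} in the lattice of subsets of E (the smallest collection of subsets of E containing F_1, …, F_m and closed under pairwise unions and pairwise intersections) is a flat of M. -/
/-! Fix a base `B` meeting every `F i` in `r (F i)` elements. Submodularity of `r` together
with `|B ∩ X| + |B ∩ Y| = |B ∩ (X ∪ Y)| + |B ∩ (X ∩ Y)|` and `|B ∩ Z| ≤ r Z` shows that the sets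
`X ⊆ E` with `|B ∩ X| = r X` are closed under `∪` and `∩`, so every member `A` of the lattice
closure satisfies `|B ∩ A| = r A`. If `s ∈ E \ A`, pick such a base `B ∋ s`; then
`insert s (B ∩ A)` is an independent subset of `A ∪ {s}` of size `r A + 1`, so `s` is not in
the closure of `A`. -/

open Finset

/-- The lattice closure of a family of finite sets: the smallest family containing it that is
closed under pairwise unions and pairwise intersections. -/
inductive finsetLatticeClosure {α : Type*} [DecidableEq α] (𝒜 : Set (Finset α)) : Finset α → Prop
  | base {A : Finset α} : A ∈ 𝒜 → finsetLatticeClosure 𝒜 A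
  | union {A B : Finset α} : finsetLatticeClosure 𝒜 A → finsetLatticeClosure 𝒜 B → finsetLatticeClosure 𝒜 (A ∪ B)
  | inter {A B : Finset α} : finsetLatticeClosure 𝒜 A → finsetLatticeClosure 𝒜 B → finsetLatticeClosure 𝒜 (A ∩ B)

namespace FinMatroid

variable {α : Type*} [DecidableEq α] {M : FinMatroid α}

theorem Indep.subset_s8 {I J : Finset α} (hI : M.Indep I) (hJI : J ⊆ I) : M.Indep J := by
  obtain ⟨hIE, hIr⟩ := hI
  have hJE : J ⊆ M.E := hJI.trans hIE
  refine ⟨hJE, le_antisymm (M.r_le_card hJE) ?_⟩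
  have hdiff : I \ J ⊆ M.E := sdiff_subset.trans hIE
  have hsub := M.r_submod hJE hdiff
  rw [union_sdiff_of_subset hJI, inter_sdiff_self] at hsub
  have hdiff_le := M.r_le_card hdiff
  have hcard : (I \ J).card = I.card - J.card := card_sdiff_of_subset hJI
  have hJI_card : J.card ≤ I.card := card_le_card hJI
  omega

theorem Indep.card_le_r {I X : Finset α} (hI : M.Indep I) (hIX : I ⊆ X) (hXE : X ⊆ M.E) :
    I.card ≤ M.r X :=
  hI.2 ▸ M.r_mono hIX hXE

theorem Indep.card_inter_le_r {B X : Finset α} (hB : M.Indep B) (hXE : X ⊆ M.E) :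
    (B ∩ X).card ≤ M.r X :=
  (hB.subset_s8 inter_subset_left).card_le_r inter_subset_right hXE

theorem card_inter_union_add_card_inter_inter (B X Y : Finset α) :
    (B ∩ (X ∪ Y)).card + (B ∩ (X ∩ Y)).card = (B ∩ X).card + (B ∩ Y).card := by
  rw [inter_union_distrib_left, inter_inter_distrib_left]
  exact card_union_add_card_inter (B ∩ X) (B ∩ Y)

theorem Indep.card_inter_union_eq_r {B X Y : Finset α} (hB : M.Indep B) (hX : X ⊆ M.E)
    (hY : Y ⊆ M.E) (hBX : (B ∩ X).card = M.r X) (hBY : (B ∩ Y).card = M.r Y) :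
    (B ∩ (X ∪ Y)).card = M.r (X ∪ Y) := by
  have hsub := M.r_submod hX hY
  have hunion := hB.card_inter_le_r (union_subset hX hY)
  have hinter := hB.card_inter_le_r (X := X ∩ Y) (inter_subset_left.trans hX)
  have hcard := card_inter_union_add_card_inter_inter B X Y
  omega

theorem Indep.card_inter_inter_eq_r {B X Y : Finset α} (hB : M.Indep B) (hX : X ⊆ M.E)
    (hY : Y ⊆ M.E) (hBX : (B ∩ X).card = M.r X) (hBY : (B ∩ Y).card = M.r Y) :
    (B ∩ (X ∩ Y)).card = M.r (X ∩ Y) := by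
  have hsub := M.r_submod hX hY
  have hunion := hB.card_inter_le_r (union_subset hX hY)
  have hinter := hB.card_inter_le_r (X := X ∩ Y) (inter_subset_left.trans hX)
  have hcard := card_inter_union_add_card_inter_inter B X Y
  omega

theorem Indep.r_lt_r_union_singleton {I A : Finset α} {s : α} (hI : M.Indep I) (hsI : s ∈ I)
    (hsA : s ∉ A) (hAE : A ⊆ M.E) (hIA : (I ∩ A).card = M.r A) :
    M.r A < M.r (A ∪ {s}) := by
  have hJI : insert s (I ∩ A) ⊆ I := insert_subset hsI inter_subset_left
  have hJA : insert s (I ∩ A) ⊆ A ∪ {s} := by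
    rw [union_comm, ← insert_eq]
    exact insert_subset_insert s inter_subset_right
  have hle := (hI.subset_s8 hJI).card_le_r hJA
    (union_subset hAE (singleton_subset_iff.2 (hI.1 hsI)))
  rw [card_insert_of_notMem (fun h ↦ hsA (mem_inter.1 h).2)] at hle
  omega

theorem flat_of_forall_r_lt {A : Finset α} (hAE : A ⊆ M.E)
    (hlt : ∀ s ∈ M.E, s ∉ A → M.r A < M.r (A ∪ {s})) : M.Flat A := by
  ext s
  rw [mem_filter]
  constructor
  · intro hsA
    rw [union_eq_left.2 (singleton_subset_iff.2 hsA)]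
    exact ⟨hAE hsA, rfl⟩
  · rintro ⟨hsE, hr⟩
    by_contra hsA
    exact (hlt s hsE hsA).ne' hr

end FinMatroid

namespace finsetLatticeClosure

variable {α : Type*} [DecidableEq α] {𝒜 : Set (Finset α)} {A : Finset α}

theorem subset_s8 {E : Finset α} (h𝒜 : ∀ X ∈ 𝒜, X ⊆ E) (hA : finsetLatticeClosure 𝒜 A) :
    A ⊆ E := by
  induction hA with
  | base hX => exact h𝒜 _ hX
  | union _ _ ihX ihY => exact union_subset ihX ihY
  | inter _ _ ihX _ => exact inter_subset_left.trans ihX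

theorem card_inter_eq_r {M : FinMatroid α} {B : Finset α} (hB : M.Indep B)
    (h𝒜 : ∀ X ∈ 𝒜, X ⊆ M.E) (hB𝒜 : ∀ X ∈ 𝒜, (B ∩ X).card = M.r X)
    (hA : finsetLatticeClosure 𝒜 A) : (B ∩ A).card = M.r A := by
  induction hA with
  | base hX => exact hB𝒜 _ hX
  | union hX hY ihX ihY => exact hB.card_inter_union_eq_r (hX.subset_s8 h𝒜) (hY.subset_s8 h𝒜) ihX ihY
  | inter hX hY ihX ihY => exact hB.card_inter_inter_eq_r (hX.subset_s8 h𝒜) (hY.subset_s8 h𝒜) ihX ihY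

end finsetLatticeClosure

theorem statement8_general {α : Type*} [DecidableEq α] {m : ℕ} (M : FinMatroid α)
    (F : Fin m → Finset α) (hF : ∀ i, F i ⊆ M.E)
    (hcover : ∀ x ∈ M.E, ∃ B : Finset α, M.Base B ∧
      (∀ i, (B ∩ F i).card = M.r (F i)) ∧ x ∈ B)
    (A : Finset α) (hA : finsetLatticeClosure (Set.range F) A) :
    M.Flat A := by
  have hFE : ∀ X ∈ Set.range F, X ⊆ M.E := by
    rintro _ ⟨i, rfl⟩
    exact hF i
  have hAE : A ⊆ M.E := hA.subset_s8 hFE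
  refine M.flat_of_forall_r_lt hAE fun s hsE hsA ↦ ?_
  obtain ⟨B, hB, hBF, hsB⟩ := hcover s hsE
  have hBA : (B ∩ A).card = M.r A :=
    hA.card_inter_eq_r hB.1 hFE (by rintro _ ⟨i, rfl⟩; exact hBF i)
  exact hB.1.r_lt_r_union_singleton hsB hsA hAE hBA

/-- If there is a base `B` with `|B ∩ F i| = r (F i)` for all `i`, and every
element of `E` lies in at least one such base, then every member of the lattice closure of
`{F 1, …, F m}` under pairwise unions and intersections is a flat of `M`. -/
theorem statement8 {α : Type*} [DecidableEq α] {m : ℕ} (M : FinMatroid α)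
    (F : Fin m → Finset α) (hF : ∀ i, F i ⊆ M.E)
    (hexists : ∃ B : Finset α, M.Base B ∧ ∀ i, (B ∩ F i).card = M.r (F i))
    (hcover : ∀ x ∈ M.E, ∃ B : Finset α, M.Base B ∧
      (∀ i, (B ∩ F i).card = M.r (F i)) ∧ x ∈ B)
    (A : Finset α) (hA : finsetLatticeClosure (Set.range F) A) :
    M.Flat A :=
  statement8_general M F hF hcover A hA
end

section
/- Let M be a connected loopless matroid on a finite set E. Then every flat F of M with ∅ ≠ F ⊊ E belongs to the lattice closure (the smallest family of subsets of E closed under pairwise unions and pairwise intersections) of the collection of non-degenerate flats of M. In particular, the lattice of flats of M can be set-theoretically recovered from the collection of its non-degenerate flats. -/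
open Finset

/-! Induction on `|F|`. If `M|F` is disconnected, `F` is the union of the two sides of a
separation of `M|F`, and both are flats because `M` is loopless. If `M|F` is connected but `M/F`
is not, take a minimal nonempty separator `C` of `M/F` and its complement `C' = (E \ F) \ C`, so
that `F = (E \ C) ∩ (E \ C')`. Both `E \ C` and `E \ C'` are flats whose restrictions are
connected (a separation of `M|(E \ C)` would cut `F` or give a separation of `M`), and
`M/(E \ C) = (M/F)|C` is connected by minimality of `C`. So `E \ C` is a non-degenerate flat, and
`E \ C'` is handled by a second induction, on `|E \ F|`. -/

namespace FinMatroid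

variable {α : Type*} [DecidableEq α] {M : FinMatroid α} {A C F G X Y : Finset α} {s : α}

variable (M) in
lemma r_empty_s9 : M.r ∅ = 0 :=
  Nat.le_zero.mp (M.r_le_card (empty_subset _))

lemma r_union_le (hX : X ⊆ M.E) (hY : Y ⊆ M.E) : M.r (X ∪ Y) ≤ M.r X + M.r Y :=
  (Nat.le_add_right _ _).trans (M.r_submod hX hY)

lemma r_union_singleton_le (hX : X ⊆ M.E) (hs : s ∈ M.E) : M.r (X ∪ {s}) ≤ M.r X + 1 := by
  have hs' : {s} ⊆ M.E := singleton_subset_iff.mpr hs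
  have := M.r_le_card hs'
  rw [card_singleton] at this
  have := r_union_le hX hs'
  omega

lemma Flat.subset_ground (hF : M.Flat F) : F ⊆ M.E := by
  rw [hF]
  exact filter_subset _ _

lemma Flat.r_union_singleton (hF : M.Flat F) (hs : s ∈ M.E) (hsF : s ∉ F) :
    M.r (F ∪ {s}) = M.r F + 1 := by
  have hne : M.r (F ∪ {s}) ≠ M.r F := fun h => hsF (hF ▸ mem_filter.mpr ⟨hs, h⟩)
  have := M.r_mono subset_union_left (union_subset hF.subset_ground (singleton_subset_iff.mpr hs))
  have := r_union_singleton_le hF.subset_ground hs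
  omega

lemma flat_of_forall (hG : G ⊆ M.E) (h : ∀ s ∈ M.E, s ∉ G → M.r (G ∪ {s}) ≠ M.r G) :
    M.Flat G := by
  ext s
  rw [mem_filter]
  refine ⟨fun hs => ⟨hG hs, by rw [union_eq_left.mpr (singleton_subset_iff.mpr hs)]⟩, ?_⟩
  rintro ⟨hsE, he⟩
  by_contra hsG
  exact h s hsE hsG he

lemma Separator.subset_ground (hA : M.Separator A) : A ⊆ M.E := hA.1

lemma Separator.sdiff (hA : M.Separator A) : M.Separator (M.E \ A) := by
  refine ⟨sdiff_subset, ?_⟩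
  rw [Finset.sdiff_sdiff_eq_self hA.subset_ground, add_comm]
  exact hA.2

lemma Separator.r_union_eq (hA : M.Separator A) (hX : X ⊆ A) (hY : Y ⊆ M.E \ A) :
    M.r (X ∪ Y) = M.r X + M.r Y := by
  have hAE := hA.subset_ground
  have hXE : X ⊆ M.E := hX.trans hAE
  have hYE : Y ⊆ M.E := hY.trans sdiff_subset
  have h₁ := M.r_submod hAE (union_subset hXE (sdiff_subset : M.E \ A ⊆ M.E))
  rw [show A ∪ (X ∪ M.E \ A) = M.E by grind, show A ∩ (X ∪ M.E \ A) = X by grind] at h₁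
  have h₂ := M.r_submod (union_subset hXE hYE) (sdiff_subset : M.E \ A ⊆ M.E)
  rw [show X ∪ Y ∪ M.E \ A = X ∪ M.E \ A by grind,
    show (X ∪ Y) ∩ (M.E \ A) = Y by grind] at h₂
  have := r_union_le hXE (sdiff_subset : M.E \ A ⊆ M.E)
  have := r_union_le hXE hYE
  have := hA.2
  omega

lemma exists_separator_of_not_connected (hE : M.E.Nonempty) (hM : ¬ M.Connected) :
    ∃ S, M.Separator S ∧ S.Nonempty ∧ S ≠ M.E := by
  by_contra! h
  exact hM ⟨hE, fun S hS => S.eq_empty_or_nonempty.imp_right (h S hS)⟩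

lemma exists_minimal_separator (hE : M.E.Nonempty) (hM : ¬ M.Connected) :
    ∃ C, M.Separator C ∧ C.Nonempty ∧ C ≠ M.E ∧
      ∀ D ⊆ C, M.Separator D → D = ∅ ∨ D = C := by
  obtain ⟨S, hS, hS₀, hSE⟩ := exists_separator_of_not_connected hE hM
  obtain ⟨C, hCS, hC⟩ := exists_minimal_le_of_wellFoundedLT
    (fun C => M.Separator C ∧ C.Nonempty) S ⟨hS, hS₀⟩
  refine ⟨C, hC.1.1, hC.1.2, fun h => hSE (hS.subset_ground.antisymm (h ▸ hCS)), ?_⟩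
  intro D hDC hD
  rcases D.eq_empty_or_nonempty with h | h
  · exact .inl h
  · exact .inr (hDC.antisymm (hC.2 ⟨hD, h⟩ hDC))

lemma separator_restrict_iff (hG : G ⊆ M.E) :
    (M.restrict G).Separator A ↔ A ⊆ G ∧ M.r A + M.r (G \ A) = M.r G := by
  simp only [Separator, restrict, inter_eq_left.mpr hG]

lemma separator_contract_iff (hF : F ⊆ M.E) :
    (M.contract F).Separator C ↔
      C ⊆ M.E \ F ∧ M.r (C ∪ F) + M.r (M.E \ C) = M.r M.E + M.r F := by
  simp only [Separator, contract, inter_eq_left.mpr hF]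
  refine and_congr_right fun hC => ?_
  rw [show (M.E \ F) \ C ∪ F = M.E \ C by grind, show M.E \ F ∪ F = M.E by grind]
  have hCE : C ⊆ M.E := hC.trans sdiff_subset
  have := M.r_mono subset_union_right (union_subset hCE hF)
  have := M.r_mono (show F ⊆ M.E \ C by grind) sdiff_subset
  have := M.r_mono hF subset_rfl
  omega

lemma Separator.inter_restrict (hY : (M.restrict G).Separator Y) (hFG : F ⊆ G) (hG : G ⊆ M.E) :
    (M.restrict F).Separator (F ∩ Y) := by
  have hYG := ((separator_restrict_iff hG).mp hY).1
  have hsplit : M.r ((F ∩ Y) ∪ (F \ Y)) = M.r (F ∩ Y) + M.r (F \ Y) :=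
    hY.r_union_eq (by grind) (show F \ Y ⊆ (G ∩ M.E) \ Y by grind)
  rw [separator_restrict_iff (hFG.trans hG), sdiff_inter_self_left]
  exact ⟨inter_subset_left, by rwa [show F ∩ Y ∪ F \ Y = F by grind, eq_comm] at hsplit⟩

lemma Separator.r_union_sdiff_of_contract (hF : F ⊆ M.E) (hC : (M.contract F).Separator C)
    (hX : X ⊆ C) : M.r (X ∪ (M.E \ C)) + M.r F = M.r (X ∪ F) + M.r (M.E \ C) := by
  have hCF := ((separator_contract_iff hF).mp hC).1
  have h := hC.r_union_eq hX (subset_refl ((M.E \ F) \ C))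
  simp only [contract, inter_eq_left.mpr hF] at h
  rw [show X ∪ ((M.E \ F) \ C) ∪ F = X ∪ (M.E \ C) by grind,
    show (M.E \ F) \ C ∪ F = M.E \ C by grind] at h
  have hXE : X ⊆ M.E := hX.trans (hCF.trans sdiff_subset)
  have := M.r_mono (show F ⊆ X ∪ F from subset_union_right) (union_subset hXE hF)
  have := M.r_mono (show F ⊆ M.E \ C by grind) sdiff_subset
  have := M.r_mono (show F ⊆ X ∪ (M.E \ C) by grind) (union_subset hXE sdiff_subset)
  omega

lemma Flat.of_separator_restrict (hloop : M.Loopless) (hF : M.Flat F)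
    (hA : (M.restrict F).Separator A) : M.Flat A := by
  have hFE := hF.subset_ground
  obtain ⟨hAF, hAeq⟩ := (separator_restrict_iff hFE).mp hA
  refine flat_of_forall (hAF.trans hFE) fun s hsE hsA heq => ?_
  have hsub := M.r_submod (union_subset (hAF.trans hFE) (singleton_subset_iff.mpr hsE))
    (sdiff_subset.trans hFE : F \ A ⊆ M.E)
  by_cases hsF : s ∈ F
  · rw [show A ∪ {s} ∪ F \ A = F by grind, show (A ∪ {s}) ∩ (F \ A) = {s} by grind,
      hloop s hsE] at hsub
    omega
  · rw [show A ∪ {s} ∪ F \ A = F ∪ {s} by grind, show (A ∪ {s}) ∩ (F \ A) = ∅ by grind,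
      M.r_empty_s9, hF.r_union_singleton hsE hsF] at hsub
    omega

lemma Separator.flat_ground_sdiff_of_contract (hF : M.Flat F) (hC : (M.contract F).Separator C) :
    M.Flat (M.E \ C) := by
  have hCF := ((separator_contract_iff hF.subset_ground).mp hC).1
  refine flat_of_forall sdiff_subset fun s hsE hsC heq => ?_
  have hsC : s ∈ C := by grind
  have h := hC.r_union_sdiff_of_contract hF.subset_ground (singleton_subset_iff.mpr hsC)
  rw [union_comm, heq, union_comm, hF.r_union_singleton hsE (by grind)] at h
  omega

lemma Separator.of_restrict_ground_sdiff (hY : (M.restrict (M.E \ C)).Separator Y) (hF : F ⊆ M.E)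
    (hC : (M.contract F).Separator C) (hFY : Disjoint F Y) : M.Separator Y := by
  obtain ⟨hCF, hCeq⟩ := (separator_contract_iff hF).mp hC
  obtain ⟨hYC, hYeq⟩ := (separator_restrict_iff sdiff_subset).mp hY
  have hFY' := disjoint_left.mp hFY
  have hYE : Y ⊆ M.E := hYC.trans sdiff_subset
  have hsub := M.r_submod (sdiff_subset.trans sdiff_subset : (M.E \ C) \ Y ⊆ M.E)
    (union_subset (hCF.trans sdiff_subset) hF)
  rw [show (M.E \ C) \ Y ∪ (C ∪ F) = M.E \ Y by grind,
    show ((M.E \ C) \ Y) ∩ (C ∪ F) = F by grind] at hsub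
  have hle := r_union_le hYE (sdiff_subset : M.E \ Y ⊆ M.E)
  rw [show Y ∪ M.E \ Y = M.E by grind] at hle
  exact ⟨hYE, by omega⟩

lemma Separator.connected_restrict_ground_sdiff (hC : (M.contract F).Separator C)
    (hconn : M.Connected) (hF : F ⊆ M.E) (hrc : (M.restrict F).Connected) :
    (M.restrict (M.E \ C)).Connected := by
  have hCF := ((separator_contract_iff hF).mp hC).1
  have hFG : F ⊆ M.E \ C := by grind
  obtain ⟨⟨x, hx⟩, hFconn⟩ := hrc
  have hxF : x ∈ F := (mem_inter.mp hx).1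
  have eq_empty_of_disjoint :
      ∀ Y, (M.restrict (M.E \ C)).Separator Y → Disjoint F Y → Y = ∅ := by
    intro Y hY hFY
    refine (hconn.2 Y (hY.of_restrict_ground_sdiff hF hC hFY)).resolve_right ?_
    rintro rfl
    exact disjoint_left.mp hFY hxF (hF hxF)
  refine ⟨⟨x, by simp only [restrict]; grind⟩, fun Y hY => ?_⟩
  have hYG : Y ⊆ M.E \ C := ((separator_restrict_iff sdiff_subset).mp hY).1
  rcases hFconn (F ∩ Y) (hY.inter_restrict hFG sdiff_subset) with h | h
  · exact .inl (eq_empty_of_disjoint Y hY (disjoint_iff_inter_eq_empty.mpr h))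
  · have hGE : (M.restrict (M.E \ C)).E = M.E \ C := inter_eq_left.mpr sdiff_subset
    have hFY : F ⊆ Y := by
      rw [show (M.restrict F).E = F from inter_eq_left.mpr hF] at h
      exact inter_eq_left.mp h
    have h' := eq_empty_of_disjoint _ hY.sdiff
      (disjoint_left.mpr fun _ ha ha' => (mem_sdiff.mp ha').2 (hFY ha))
    rw [hGE] at h' ⊢
    exact .inr (hYG.antisymm (sdiff_eq_empty_iff_subset.mp h'))

lemma Separator.connected_contract_ground_sdiff (hC : (M.contract F).Separator C)
    (hF : F ⊆ M.E) (hCne : C.Nonempty)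
    (hmin : ∀ D ⊆ C, (M.contract F).Separator D → D = ∅ ∨ D = C) :
    (M.contract (M.E \ C)).Connected := by
  have hCF := ((separator_contract_iff hF).mp hC).1
  have hground : (M.contract (M.E \ C)).E = C := by simp only [contract]; grind
  refine ⟨by rwa [hground], fun D hD => ?_⟩
  rw [hground]
  obtain ⟨hDC, hDeq⟩ := (separator_contract_iff sdiff_subset).mp hD
  rw [show M.E \ (M.E \ C) = C by grind] at hDC
  refine hmin D hDC ((separator_contract_iff hF).mpr ⟨hDC.trans hCF, ?_⟩)
  have := hC.r_union_sdiff_of_contract hF hDC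
  omega

variable (M) in
def nondegenerateFlats : Set (Finset α) := {G | M.Flat G ∧ M.Nondegenerate G}

theorem Flat.mem_latticeClosure_of_connected_restrict {F : Finset α} (hconn : M.Connected)
    (hF : M.Flat F) (hFE : F ⊂ M.E) (hrc : (M.restrict F).Connected) :
    finsetLatticeClosure M.nondegenerateFlats F := by
  obtain ⟨x, hx⟩ := hrc.1
  have hxF : x ∈ F := (mem_inter.mp hx).1
  have hF' : F ⊆ M.E := hF.subset_ground
  by_cases hcc : (M.contract F).Connected
  · exact .base ⟨hF, ne_empty_of_mem hxF, hFE, hrc, hcc⟩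
  obtain ⟨y, hyE, hyF⟩ := exists_of_ssubset hFE
  obtain ⟨C, hC, hCne, hCE, hmin⟩ :=
    exists_minimal_separator ⟨y, mem_sdiff.mpr ⟨hyE, hyF⟩⟩ hcc
  have hCF : C ⊆ M.E \ F := hC.subset_ground
  have hC' : (M.contract F).Separator ((M.E \ F) \ C) := hC.sdiff
  have hC'ne : ((M.E \ F) \ C).Nonempty := by
    rw [nonempty_iff_ne_empty, Ne, sdiff_eq_empty_iff_subset]
    exact fun h => hCE (hCF.antisymm h)
  have hG₁ : M.E \ C ∈ M.nondegenerateFlats :=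
    ⟨hC.flat_ground_sdiff_of_contract hF, ne_empty_of_mem (show x ∈ M.E \ C by grind),
      sdiff_ssubset (hCF.trans sdiff_subset) hCne,
      hC.connected_restrict_ground_sdiff hconn hF' hrc,
      hC.connected_contract_ground_sdiff hF' hCne hmin⟩
  have hG₂ := (hC'.flat_ground_sdiff_of_contract hF).mem_latticeClosure_of_connected_restrict
    hconn (sdiff_ssubset (sdiff_subset.trans sdiff_subset) hC'ne)
    (hC'.connected_restrict_ground_sdiff hconn hF' hrc)
  rw [show F = (M.E \ C) ∩ (M.E \ ((M.E \ F) \ C)) by grind]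
  exact .inter (.base hG₁) hG₂
termination_by (M.E \ F).card
decreasing_by
  rw [show M.E \ (M.E \ ((M.E \ F) \ C)) = (M.E \ F) \ C by grind]
  exact card_lt_card (sdiff_ssubset hCF hCne)

theorem Flat.mem_latticeClosure {F : Finset α} (hconn : M.Connected) (hloop : M.Loopless)
    (hF : M.Flat F) (hne : F.Nonempty) (hFE : F ⊂ M.E) :
    finsetLatticeClosure M.nondegenerateFlats F := by
  by_cases hrc : (M.restrict F).Connected
  · exact hF.mem_latticeClosure_of_connected_restrict hconn hFE hrc
  have hground : (M.restrict F).E = F := inter_eq_left.mpr hF.subset_ground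
  obtain ⟨A, hA, hAne, hAF⟩ := exists_separator_of_not_connected (by rwa [hground]) hrc
  have hA' := hA.sdiff
  rw [hground] at hAF hA'
  have hAF' : A ⊂ F := ssubset_of_subset_of_ne (hground ▸ hA.subset_ground) hAF
  have hA'ne : (F \ A).Nonempty := by
    rw [nonempty_iff_ne_empty, Ne, sdiff_eq_empty_iff_subset]
    exact fun h => hAF (hAF'.1.antisymm h)
  rw [← union_sdiff_of_subset hAF'.1]
  exact .union
    ((hF.of_separator_restrict hloop hA).mem_latticeClosure hconn hloop hAne (hAF'.trans hFE))
    ((hF.of_separator_restrict hloop hA').mem_latticeClosure hconn hloop hA'ne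
      ((sdiff_ssubset hAF'.1 hAne).trans hFE))
termination_by F.card
decreasing_by
  · exact card_lt_card hAF'
  · exact card_lt_card (sdiff_ssubset hAF'.1 hAne)

end FinMatroid

/-- For a connected loopless matroid `M`, every flat `∅ ≠ F ⊊ E` lies in
the lattice closure of the collection of non-degenerate flats of `M`. -/
theorem statement9 {α : Type*} [DecidableEq α] (M : FinMatroid α)
    (hconn : M.Connected) (hloop : M.Loopless)
    (F : Finset α) (hflat : M.Flat F) (hne : F ≠ ∅) (hproper : F ⊂ M.E) :
    finsetLatticeClosure {G : Finset α | M.Flat G ∧ M.Nondegenerate G} F :=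
  hflat.mem_latticeClosure hconn hloop (nonempty_iff_ne_empty.mpr hne) hproper
end
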